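/- Let T be an ℕ-valued random variable, and for each k ≥ 0 let S_k be an event independent of {T = t-k} for all t, with P(S_k) < ρ, and let (Z_k)_{k≥0} be random variables with 0 ≤ Z_k ≤ M a.s. and {Z_k > τ/2} ⊆ S_k. Then for every t ≥ 0, Σ_{k=0}^{t} E[Z_k · 1_{T = t-k}] ≤ (τ/2 + M ρ) · P(T ≤ t). -/

import Mathlib

/-!
On `{T = m}` the variable `Z k` is at most `τ/2` outside `S k` and at most `M` on `S k`, so
`E[Z k; T = m] ≤ (τ/2) P(T = m) + M P(S k ∩ {T = m})`. Independence turns the last probability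
into `P(S k) P(T = m) ≤ ρ P(T = m)`, and summing over `k ≤ t` the events `{T = t - k}` partition
`{T ≤ t}`.
-/

open MeasureTheory

namespace MeasureTheory

variable {Ω : Type*} [MeasurableSpace Ω] {μ : Measure Ω} [IsFiniteMeasure μ]

theorem setIntegral_le_add_measureReal_inter {A S : Set Ω} (hS : MeasurableSet S)
    {f : Ω → ℝ} {c M : ℝ} (hc : 0 ≤ c) (hf : ∀ᵐ ω ∂μ, 0 ≤ f ω ∧ f ω ≤ M)
    (hfS : {ω | c < f ω} ⊆ S) :
    ∫ ω in A, f ω ∂μ ≤ c * μ.real A + M * μ.real (S ∩ A) := by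
  have hle : ∀ᵐ ω ∂μ.restrict A, f ω ≤ c + S.indicator (fun _ => M) ω := by
    refine ae_restrict_of_ae ?_
    filter_upwards [hf] with ω hfω
    by_cases hω : ω ∈ S
    · rw [Set.indicator_of_mem hω]
      linarith [hfω.2]
    · rw [Set.indicator_of_notMem hω, add_zero]
      exact not_lt.1 fun h => hω (hfS h)
  have hint : Integrable (fun ω => c + S.indicator (fun _ => M) ω) (μ.restrict A) :=
    (integrable_const c).add ((integrable_const M).indicator hS)
  calc ∫ ω in A, f ω ∂μ ≤ ∫ ω in A, c + S.indicator (fun _ => M) ω ∂μ :=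
        integral_mono_of_nonneg (ae_restrict_of_ae (hf.mono fun _ h => h.1)) hint hle
    _ = c * μ.real A + M * μ.real (S ∩ A) := by
        rw [integral_add (integrable_const c) ((integrable_const M).indicator hS),
          setIntegral_const, integral_indicator_const M hS, measureReal_restrict_apply hS,
          smul_eq_mul, smul_eq_mul, mul_comm, mul_comm (μ.real _)]

theorem setIntegral_le_of_measure_inter_eq_mul {A S : Set Ω} (hS : MeasurableSet S)
    {f : Ω → ℝ} {c M ρ : ℝ} (hc : 0 ≤ c) (hM : 0 ≤ M) (hf : ∀ᵐ ω ∂μ, 0 ≤ f ω ∧ f ω ≤ M)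
    (hfS : {ω | c < f ω} ⊆ S) (hindep : μ (S ∩ A) = μ S * μ A) (hSρ : μ S < ENNReal.ofReal ρ) :
    ∫ ω in A, f ω ∂μ ≤ (c + M * ρ) * μ.real A := by
  have hSA : μ.real (S ∩ A) ≤ ρ * μ.real A := by
    rw [measureReal_def, hindep, ENNReal.toReal_mul, ← measureReal_def, ← measureReal_def]
    exact mul_le_mul_of_nonneg_right
      ((ENNReal.lt_ofReal_iff_toReal_lt (measure_ne_top μ S)).1 hSρ).le measureReal_nonneg
  calc ∫ ω in A, f ω ∂μ ≤ c * μ.real A + M * μ.real (S ∩ A) :=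
        setIntegral_le_add_measureReal_inter hS hc hf hfS
    _ ≤ c * μ.real A + M * (ρ * μ.real A) := by gcongr
    _ = (c + M * ρ) * μ.real A := by ring

theorem sum_range_measureReal_sub_eq_measureReal_le {T : Ω → ℕ} (hT : Measurable T) (t : ℕ) :
    ∑ k ∈ Finset.range (t + 1), μ.real {ω | T ω = t - k} = μ.real {ω | T ω ≤ t} := by
  have hpre : T ⁻¹' ↑(Finset.range (t + 1)) = {ω | T ω ≤ t} := by
    ext ω
    simp
  rw [← hpre, ← sum_measureReal_preimage_singleton _ fun m _ => hT (measurableSet_singleton m),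
    ← Finset.sum_range_reflect (fun m => μ.real (T ⁻¹' {m}))]
  rfl

end MeasureTheory

theorem stmt_4_general {Ω : Type*} [MeasurableSpace Ω] (μ : Measure Ω) [IsProbabilityMeasure μ]
    (T : Ω → ℕ) (hTmeas : Measurable T)
    (S : ℕ → Set Ω) (hSmeas : ∀ k, MeasurableSet (S k))
    (Z : ℕ → Ω → ℝ)
    (M τ ρ : ℝ) (hτ : 0 < τ)
    (hindep : ∀ k m : ℕ, μ (S k ∩ {ω | T ω = m}) = μ (S k) * μ {ω | T ω = m})
    (hS : ∀ k, μ (S k) < ENNReal.ofReal ρ)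
    (hZbdd : ∀ᵐ ω ∂μ, ∀ k, 0 ≤ Z k ω ∧ Z k ω ≤ M)
    (hZS : ∀ k, {ω | Z k ω > τ / 2} ⊆ S k) :
    ∀ t : ℕ,
      ∑ k ∈ Finset.range (t + 1),
          ∫ ω, ({ω | T ω = t - k}.indicator (fun _ => (1 : ℝ)) ω) * Z k ω ∂μ
        ≤ (τ / 2 + M * ρ) * (μ {ω | T ω ≤ t}).toReal := by
  intro t
  have hM : 0 ≤ M := by
    obtain ⟨ω, hω⟩ := hZbdd.exists
    exact (hω 0).1.trans (hω 0).2
  have hterm (k m : ℕ) :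
      ∫ ω, ({ω | T ω = m}.indicator (fun _ => (1 : ℝ)) ω) * Z k ω ∂μ
        ≤ (τ / 2 + M * ρ) * μ.real {ω | T ω = m} := by
    have hm : MeasurableSet {ω | T ω = m} := hTmeas (measurableSet_singleton m)
    simp_rw [← Set.indicator_mul_left, one_mul]
    rw [integral_indicator hm]
    exact setIntegral_le_of_measure_inter_eq_mul (hSmeas k) (by positivity) hM
      (hZbdd.mono fun ω hω => hω k) (hZS k) (hindep k m) (hS k)
  calc _ ≤ ∑ k ∈ Finset.range (t + 1), (τ / 2 + M * ρ) * μ.real {ω | T ω = t - k} :=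
        Finset.sum_le_sum fun k _ => hterm k (t - k)
    _ = _ := by
        rw [← Finset.mul_sum, sum_range_measureReal_sub_eq_measureReal_le hTmeas, measureReal_def]

theorem stmt_4 {Ω : Type*} [MeasurableSpace Ω] (μ : Measure Ω) [IsProbabilityMeasure μ]
    (T : Ω → ℕ) (hTmeas : Measurable T)
    (S : ℕ → Set Ω) (hSmeas : ∀ k, MeasurableSet (S k))
    (Z : ℕ → Ω → ℝ) (hZmeas : ∀ k, Measurable (Z k))
    (M τ ρ : ℝ) (hM : 0 < M) (hτ : 0 < τ) (hρ : 0 < ρ)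
    (hindep : ∀ k m : ℕ, μ (S k ∩ {ω | T ω = m}) = μ (S k) * μ {ω | T ω = m})
    (hS : ∀ k, μ (S k) < ENNReal.ofReal ρ)
    (hZbdd : ∀ᵐ ω ∂μ, ∀ k, 0 ≤ Z k ω ∧ Z k ω ≤ M)
    (hZS : ∀ k, {ω | Z k ω > τ / 2} ⊆ S k) :
    ∀ t : ℕ,
      ∑ k ∈ Finset.range (t + 1),
          ∫ ω, ({ω | T ω = t - k}.indicator (fun _ => (1 : ℝ)) ω) * Z k ω ∂μ
        ≤ (τ / 2 + M * ρ) * (μ {ω | T ω ≤ t}).toReal :=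
  stmt_4_general μ T hTmeas S hSmeas Z M τ ρ hτ hindep hS hZbdd hZS
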